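/- Let P and Q be probability measures on a measurable space generated by an increasing sequence of finite sub-σ-algebras F_n, and let g_n = dQ_n/dP_n be the Radon–Nikodym derivative of the restrictions to F_n (assume P_n gives positive mass to all atoms). Then (g_n) is a nonnegative P-martingale, and Q is absolutely continuous with respect to P if and only if g_n converges P-almost surely to a limit g with E_P[g] = 1. -/

import Mathlib

/-!
Since `P` charges every nonempty `ℱ n`-measurable set, `Q ≪ P` on `ℱ n`, so `g n` integrates
to `Q s` over every `s ∈ ℱ n`; this says exactly that `g n = E_P[g k | ℱ n]` for `n ≤ k`.
If `Q ≪ P`, the same identity exhibits `g n` as `E_P[dQ/dP | ℱ n]`, which converges a.s. by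
Lévy's upward theorem. Conversely, if `g n → gl` a.s. with `∫ gl dP = 1`, Fatou gives
`∫_s gl dP ≤ Q s` for `s ∈ ⋃ ℱ n`; as both measures have mass one, applying this to `sᶜ` turns
it into an equality, and the π-λ theorem gives `Q = gl • P ≪ P`.
-/

open MeasureTheory Filter Topology

namespace MeasureTheory

noncomputable def densityProcess {α ι : Type*} {m : MeasurableSpace α} [Preorder ι]
    (P Q : Measure α) (ℱ : Filtration ι m) (i : ι) (ω : α) : ℝ :=
  ((Q.trim (ℱ.le i)).rnDeriv (P.trim (ℱ.le i)) ω).toReal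

lemma Measure.absolutelyContinuous_of_forall_pos {α : Type*} {m : MeasurableSpace α}
    {μ ν : Measure α} (hpos : ∀ s, MeasurableSet s → s.Nonempty → 0 < ν s) : μ ≪ ν := by
  refine Measure.AbsolutelyContinuous.mk fun s hs hνs => ?_
  obtain rfl | hne := s.eq_empty_or_nonempty
  · exact measure_empty
  · exact absurd hνs (hpos s hs hne).ne'

lemma Measure.measure_eq_of_le_of_compl_le {α : Type*} [MeasurableSpace α] {μ ν : Measure α}
    [IsFiniteMeasure ν] {s : Set α} (huniv : μ Set.univ = ν Set.univ) (hs : MeasurableSet s)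
    (h : μ s ≤ ν s) (hc : μ sᶜ ≤ ν sᶜ) : μ s = ν s := by
  refine le_antisymm h ((ENNReal.add_le_add_iff_right (measure_ne_top ν sᶜ)).mp ?_)
  calc ν s + ν sᶜ = μ s + μ sᶜ := by
        rw [measure_add_measure_compl hs, measure_add_measure_compl hs, huniv]
    _ ≤ μ s + ν sᶜ := by gcongr

lemma Measure.ext_of_forall_measurableSet_filtration {α ι : Type*} {m : MeasurableSpace α}
    [Preorder ι] [IsDirectedOrder ι] [Nonempty ι] {μ ν : Measure α} [IsFiniteMeasure μ]
    {ℱ : Filtration ι m} (hgen : ⨆ i, ℱ i = m)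
    (h : ∀ i s, MeasurableSet[ℱ i] s → μ s = ν s) : μ = ν := by
  obtain ⟨i⟩ := ‹Nonempty ι›
  refine ext_of_generate_finite (⋃ i, {s | MeasurableSet[ℱ i] s}) ?_ ?_ ?_
    (h i _ MeasurableSet.univ)
  · exact hgen.symm.trans (MeasurableSpace.generateFrom_iUnion_measurableSet _).symm
  · exact isPiSystem_iUnion_of_directed_le _
      (fun i => @MeasurableSpace.isPiSystem_measurableSet _ (ℱ i)) fun i j =>
        let ⟨k, hik, hjk⟩ := exists_ge_ge i j
        ⟨k, fun s hs => ℱ.mono hik s hs, fun s hs => ℱ.mono hjk s hs⟩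
  · simp only [Set.mem_iUnion]
    rintro s ⟨i, hs⟩
    exact h i s hs

section DensityProcess

variable {α ι : Type*} {m : MeasurableSpace α} [Preorder ι] {P Q : Measure α}
  {ℱ : Filtration ι m}

lemma densityProcess_nonneg (i : ι) (ω : α) : 0 ≤ densityProcess P Q ℱ i ω :=
  ENNReal.toReal_nonneg

lemma stronglyMeasurable_densityProcess (i : ι) :
    StronglyMeasurable[ℱ i] (densityProcess P Q ℱ i) :=
  (Measure.measurable_rnDeriv _ _).ennreal_toReal.stronglyMeasurable

lemma measurable_densityProcess (i : ι) : Measurable (densityProcess P Q ℱ i) :=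
  (stronglyMeasurable_densityProcess i).measurable.mono (ℱ.le i) le_rfl

variable [IsFiniteMeasure Q]

lemma integrable_densityProcess (i : ι) : Integrable (densityProcess P Q ℱ i) P :=
  integrable_of_integrable_trim (ℱ.le i) Measure.integrable_toReal_rnDeriv

variable [IsFiniteMeasure P]

lemma setIntegral_densityProcess {i : ι} (hac : Q.trim (ℱ.le i) ≪ P.trim (ℱ.le i)) {s : Set α}
    (hs : MeasurableSet[ℱ i] s) : ∫ ω in s, densityProcess P Q ℱ i ω ∂P = Q.real s := by
  rw [setIntegral_trim (ℱ.le i) (stronglyMeasurable_densityProcess i) hs, measureReal_def,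
    ← trim_measurableSet_eq (ℱ.le i) hs, ← measureReal_def]
  exact Measure.setIntegral_toReal_rnDeriv hac s

lemma setLIntegral_densityProcess {i : ι} (hac : Q.trim (ℱ.le i) ≪ P.trim (ℱ.le i))
    {s : Set α} (hs : MeasurableSet[ℱ i] s) :
    ∫⁻ ω in s, ENNReal.ofReal (densityProcess P Q ℱ i ω) ∂P = Q s := by
  rw [← ofReal_integral_eq_lintegral_ofReal (integrable_densityProcess i).integrableOn
    (ae_of_all _ (densityProcess_nonneg i)), setIntegral_densityProcess hac hs,
    measureReal_def, ENNReal.ofReal_toReal (measure_ne_top Q s)]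

lemma densityProcess_ae_eq_condExp {i : ι} (hac : Q.trim (ℱ.le i) ≪ P.trim (ℱ.le i))
    {f : α → ℝ} (hf : Integrable f P)
    (hfQ : ∀ s, MeasurableSet[ℱ i] s → ∫ ω in s, f ω ∂P = Q.real s) :
    densityProcess P Q ℱ i =ᵐ[P] P[f|ℱ i] :=
  ae_eq_condExp_of_forall_setIntegral_eq (ℱ.le i) hf
    (fun _ _ _ => (integrable_densityProcess i).integrableOn)
    (fun s hs _ => by rw [setIntegral_densityProcess hac hs, hfQ s hs])
    (stronglyMeasurable_densityProcess i).aestronglyMeasurable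

theorem martingale_densityProcess (hac : ∀ i, Q.trim (ℱ.le i) ≪ P.trim (ℱ.le i)) :
    Martingale (densityProcess P Q ℱ) ℱ P :=
  ⟨stronglyMeasurable_densityProcess, fun i j hij =>
    (densityProcess_ae_eq_condExp (hac i) (integrable_densityProcess j)
      fun _ hs => setIntegral_densityProcess (hac j) (ℱ.mono hij _ hs)).symm⟩

end DensityProcess

section Convergence

variable {α : Type*} {m : MeasurableSpace α} {P Q : Measure α} [IsFiniteMeasure P]
  {ℱ : Filtration ℕ m}

theorem tendsto_densityProcess_rnDeriv [IsFiniteMeasure Q] (hgen : ⨆ n, ℱ n = m) (hQP : Q ≪ P) :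
    ∀ᵐ ω ∂P, Tendsto (fun n => densityProcess P Q ℱ n ω) atTop (𝓝 (Q.rnDeriv P ω).toReal) := by
  have hcondExp : ∀ n, densityProcess P Q ℱ n =ᵐ[P] P[fun ω => (Q.rnDeriv P ω).toReal|ℱ n] :=
    fun n => densityProcess_ae_eq_condExp (hQP.trim (ℱ.le n)) Measure.integrable_toReal_rnDeriv
      fun s _ => Measure.setIntegral_toReal_rnDeriv hQP s
  have hmeas : StronglyMeasurable[⨆ n, ℱ n] fun ω => (Q.rnDeriv P ω).toReal := by
    rw [hgen]
    exact (Measure.measurable_rnDeriv Q P).ennreal_toReal.stronglyMeasurable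
  filter_upwards [Measure.integrable_toReal_rnDeriv.tendsto_ae_condExp hmeas,
    ae_all_iff.2 hcondExp] with ω hlevy hω
  exact hlevy.congr fun n => (hω n).symm

lemma withDensity_le_of_tendsto_densityProcess [IsFiniteMeasure Q]
    (hac : ∀ n, Q.trim (ℱ.le n) ≪ P.trim (ℱ.le n)) {gl : α → ℝ}
    (hconv : ∀ᵐ ω ∂P, Tendsto (fun n => densityProcess P Q ℱ n ω) atTop (𝓝 (gl ω)))
    {n : ℕ} {s : Set α} (hs : MeasurableSet[ℱ n] s) :
    P.withDensity (fun ω => ENNReal.ofReal (gl ω)) s ≤ Q s := by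
  rw [withDensity_apply _ (ℱ.le n s hs)]
  calc ∫⁻ ω in s, ENNReal.ofReal (gl ω) ∂P
      = ∫⁻ ω in s, liminf (fun k => ENNReal.ofReal (densityProcess P Q ℱ k ω)) atTop ∂P := by
        refine lintegral_congr_ae ?_
        filter_upwards [ae_restrict_of_ae hconv] with ω hω
        exact ((ENNReal.continuous_ofReal.tendsto _).comp hω).liminf_eq.symm
    _ ≤ liminf (fun k => ∫⁻ ω in s, ENNReal.ofReal (densityProcess P Q ℱ k ω) ∂P) atTop :=
        lintegral_liminf_le fun k => (measurable_densityProcess k).ennreal_ofReal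
    _ = Q s := by
        refine (tendsto_const_nhds.congr' ?_).liminf_eq
        filter_upwards [eventually_ge_atTop n] with k hk
        exact (setLIntegral_densityProcess (hac k) (ℱ.mono hk s hs)).symm

theorem eq_withDensity_of_tendsto_densityProcess [IsProbabilityMeasure Q]
    (hgen : ⨆ n, ℱ n = m) (hac : ∀ n, Q.trim (ℱ.le n) ≪ P.trim (ℱ.le n)) {gl : α → ℝ}
    (hconv : ∀ᵐ ω ∂P, Tendsto (fun n => densityProcess P Q ℱ n ω) atTop (𝓝 (gl ω)))
    (hint : ∫ ω, gl ω ∂P = 1) :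
    Q = P.withDensity fun ω => ENNReal.ofReal (gl ω) := by
  have hgl_nonneg : 0 ≤ᵐ[P] gl := by
    filter_upwards [hconv] with ω hω
    exact ge_of_tendsto' hω fun n => densityProcess_nonneg n ω
  -- a non-integrable `gl` would have the junk integral `0`
  have hgl_int : Integrable gl P := Integrable.of_integral_ne_zero (by simp [hint])
  have : IsFiniteMeasure (P.withDensity fun ω => ENNReal.ofReal (gl ω)) :=
    isFiniteMeasure_withDensity_ofReal hgl_int.hasFiniteIntegral
  have huniv : P.withDensity (fun ω => ENNReal.ofReal (gl ω)) Set.univ = Q Set.univ := by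
    rw [withDensity_apply _ MeasurableSet.univ, Measure.restrict_univ,
      ← ofReal_integral_eq_lintegral_ofReal hgl_int hgl_nonneg, hint, ENNReal.ofReal_one,
      measure_univ]
  refine (Measure.ext_of_forall_measurableSet_filtration hgen fun n s hs => ?_).symm
  exact Measure.measure_eq_of_le_of_compl_le huniv (ℱ.le n s hs)
    (withDensity_le_of_tendsto_densityProcess hac hconv hs)
    (withDensity_le_of_tendsto_densityProcess hac hconv hs.compl)

end Convergence

end MeasureTheory

theorem stmt_10_general {α : Type*} {m : MeasurableSpace α}
    (P Q : Measure α) [IsProbabilityMeasure P] [IsProbabilityMeasure Q]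
    (ℱ : Filtration ℕ m)
    (hgen : (⨆ n, (ℱ n : MeasurableSpace α)) = m)
    (hatoms : ∀ n (s : Set α), MeasurableSet[ℱ n] s → s.Nonempty → 0 < P s)
    (g : ℕ → α → ℝ)
    (hg : ∀ n, g n = fun ω => ((Q.trim (ℱ.le n)).rnDeriv (P.trim (ℱ.le n)) ω).toReal) :
    Martingale g ℱ P ∧ (∀ n, 0 ≤ᵐ[P] g n) ∧
      (Q ≪ P ↔ ∃ gl : α → ℝ,
        (∀ᵐ ω ∂P, Tendsto (fun n => g n ω) atTop (𝓝 (gl ω))) ∧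
        ∫ ω, gl ω ∂P = 1) := by
  have hac : ∀ n, Q.trim (ℱ.le n) ≪ P.trim (ℱ.le n) := fun n =>
    Measure.absolutelyContinuous_of_forall_pos fun s hs hne => by
      simpa only [trim_measurableSet_eq _ hs] using hatoms n s hs hne
  obtain rfl : g = densityProcess P Q ℱ := funext hg
  refine ⟨martingale_densityProcess hac, fun n => ae_of_all _ (densityProcess_nonneg n),
    fun hQP => ⟨_, tendsto_densityProcess_rnDeriv hgen hQP, ?_⟩, ?_⟩
  · simp [Measure.integral_toReal_rnDeriv hQP]
  · rintro ⟨gl, hconv, hint⟩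
    rw [eq_withDensity_of_tendsto_densityProcess hgen hac hconv hint]
    exact withDensity_absolutelyContinuous P _

/-- Let `P, Q` be probability measures on a space whose σ-algebra is generated by an
increasing sequence of finite sub-σ-algebras `ℱ n` on whose nonempty measurable sets `P` is
positive, and let `g n` be the Radon–Nikodym derivative of the restrictions of `Q` and `P`
to `ℱ n`. Then `(g n)` is a nonnegative `P`-martingale, and `Q ≪ P` iff `g n` converges
`P`-a.s. to a limit with `P`-integral `1`. -/
theorem stmt_10 {α : Type*} {m : MeasurableSpace α}
    (P Q : Measure α) [IsProbabilityMeasure P] [IsProbabilityMeasure Q]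
    (ℱ : Filtration ℕ m)
    (hgen : (⨆ n, (ℱ n : MeasurableSpace α)) = m)
    (hfin : ∀ n, {s : Set α | MeasurableSet[ℱ n] s}.Finite)
    (hatoms : ∀ n (s : Set α), MeasurableSet[ℱ n] s → s.Nonempty → 0 < P s)
    (g : ℕ → α → ℝ)
    (hg : ∀ n, g n = fun ω => ((Q.trim (ℱ.le n)).rnDeriv (P.trim (ℱ.le n)) ω).toReal) :
    Martingale g ℱ P ∧ (∀ n, 0 ≤ᵐ[P] g n) ∧
      (Q ≪ P ↔ ∃ gl : α → ℝ,
        (∀ᵐ ω ∂P, Tendsto (fun n => g n ω) atTop (𝓝 (gl ω))) ∧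
        ∫ ω, gl ω ∂P = 1) :=
  stmt_10_general P Q ℱ hgen hatoms g hg
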